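/- For natural numbers k and N, ∏_{j=1}^{N} (Γ(j) Γ(2k+j)) / Γ(j+k)² is asymptotic, as N → ∞, to g_k · N^{k²}/Γ(k²+1), where g_k = (k²)! ∏_{j=0}^{k-1} j!/(k+j)!. -/

import Mathlib

/-! Writing `P(x) = x (x + 1) ⋯ (x + k - 1) = Γ(x + k) / Γ(x)`, the `j`-th factor is
`P(j + k) / P(j)`, so the product telescopes to `∏_{i<k} P(N + 1 + i) / ∏_{i<k} P(1 + i)`.
The denominator is `∏_{i<k} (k + i)! / i!`, which cancels against `g_k / (k²)!`, and the
numerator is a product of the `k²` linear factors `N + 1 + i + m` (`i, m < k`),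
hence `∼ N^{k²}`. -/

open Filter Finset

theorem Real.Gamma_add_nat_eq_mul_prod {x : ℝ} (hx : 0 < x) (n : ℕ) :
    Real.Gamma (x + n) = Real.Gamma x * ∏ m ∈ range n, (x + m) := by
  induction n with
  | zero => simp
  | succ n ih =>
    rw [Nat.cast_succ, ← add_assoc, Real.Gamma_add_one (by positivity), ih, prod_range_succ]
    ring

theorem Real.Gamma_mul_Gamma_add_two_mul_div_sq {x : ℝ} (hx : 0 < x) (k : ℕ) :
    Real.Gamma x * Real.Gamma (2 * k + x) / Real.Gamma (x + k) ^ 2 =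
      (∏ m ∈ range k, (x + k + m)) / ∏ m ∈ range k, (x + m) := by
  have hx' : 0 < x + k := by positivity
  rw [show 2 * (k : ℝ) + x = x + k + k by ring, Real.Gamma_add_nat_eq_mul_prod hx',
    Real.Gamma_add_nat_eq_mul_prod hx]
  have hΓ : 0 < Real.Gamma x := Real.Gamma_pos_of_pos hx
  have hP : 0 < ∏ m ∈ range k, (x + m) := prod_pos fun m _ => by positivity
  field_simp

theorem Finset.prod_range_div_shift {G : Type*} [CommGroupWithZero G] {f : ℕ → G}
    (hf : ∀ n, f n ≠ 0) (k N : ℕ) :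
    ∏ j ∈ range N, f (j + k) / f j =
      (∏ i ∈ range k, f (N + i)) / ∏ i ∈ range k, f i := by
  induction N with
  | zero => simp [div_self (prod_ne_zero_iff.2 fun i _ => hf i)]
  | succ N ih =>
    have shift :
        (∏ i ∈ range k, f (N + 1 + i)) * f N = (∏ i ∈ range k, f (N + i)) * f (N + k) := by
      rw [← prod_range_succ (fun i => f (N + i)), prod_range_succ']
      simp only [add_assoc, add_comm 1, add_zero]
    have hprod : ∏ i ∈ range k, f i ≠ 0 := prod_ne_zero_iff.2 fun i _ => hf i
    rw [prod_range_succ, ih, div_mul_div_comm,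
      div_eq_div_iff (mul_ne_zero hprod (hf N)) hprod, ← shift]
    ac_rfl

theorem tendsto_prod_add_div_pow_card_atTop {ι : Type*} (s : Finset ι) (c : ι → ℝ) :
    Tendsto (fun x : ℝ => (∏ i ∈ s, (x + c i)) / x ^ #s) atTop (nhds 1) := by
  have h : Tendsto (fun x : ℝ => ∏ i ∈ s, (1 + c i * x⁻¹)) atTop
      (nhds (∏ i ∈ s, (1 + c i * 0))) :=
    tendsto_finsetProd s fun i _ => tendsto_const_nhds.add (tendsto_inv_atTop_zero.const_mul (c i))
  simp only [mul_zero, add_zero, prod_const_one] at h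
  refine h.congr' ?_
  filter_upwards [eventually_gt_atTop 0] with x hx
  rw [← prod_const, ← prod_div_distrib]
  refine prod_congr rfl fun i _ => ?_
  field_simp

theorem prod_Icc_Gamma_mul_Gamma_div_sq_eq (k N : ℕ) :
    ∏ j ∈ Icc 1 N, Real.Gamma j * Real.Gamma (2 * k + j) / Real.Gamma (j + k) ^ 2 =
      (∏ i ∈ range k, ((N + i + 1).ascFactorial k : ℝ)) /
        ∏ i ∈ range k, ((i + 1).ascFactorial k : ℝ) := by
  rw [← Ico_add_one_right_eq_Icc, prod_Ico_eq_prod_range, Nat.add_sub_cancel,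
    ← prod_range_div_shift (f := fun n => ((n + 1).ascFactorial k : ℝ))
      (fun n => by positivity)]
  refine prod_congr rfl fun j _ => ?_
  rw [Real.Gamma_mul_Gamma_add_two_mul_div_sq (by positivity), Nat.ascFactorial_eq_prod_range,
    Nat.ascFactorial_eq_prod_range]
  push_cast
  congr 1 <;> exact prod_congr rfl fun m _ => by ring

/-- As `N → ∞`, `∏_{j=1}^{N} Γ(j) Γ(2k+j) / Γ(j+k)² ∼ g_k N^{k²} / Γ(k²+1)`,
where `g_k = (k²)! ∏_{j=0}^{k-1} j!/(k+j)!`. -/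
theorem stmt_8 (k : ℕ) :
    Tendsto (fun N : ℕ =>
      (∏ j ∈ Finset.Icc 1 N,
          Real.Gamma j * Real.Gamma (2 * k + j) / Real.Gamma (j + k) ^ 2) /
        ((((k ^ 2).factorial : ℝ) *
            ∏ j ∈ Finset.range k, (j.factorial : ℝ) / ((k + j).factorial : ℝ)) *
          (N : ℝ) ^ (k ^ 2) / Real.Gamma (k ^ 2 + 1)))
      atTop (nhds 1) := by
  have hconst : ∏ j ∈ range k, (j.factorial : ℝ) / ((k + j).factorial : ℝ) =
      (∏ i ∈ range k, ((i + 1).ascFactorial k : ℝ))⁻¹ := by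
    rw [← prod_inv_distrib]
    refine prod_congr rfl fun i _ => ?_
    rw [add_comm k, ← Nat.factorial_mul_ascFactorial]
    push_cast
    field_simp
  have hnum (N : ℕ) : ∏ i ∈ range k, ((N + i + 1).ascFactorial k : ℝ) =
      ∏ p ∈ range k ×ˢ range k, ((N : ℝ) + (1 + p.1 + p.2)) := by
    rw [prod_product]
    refine prod_congr rfl fun i _ => ?_
    rw [Nat.ascFactorial_eq_prod_range]
    push_cast
    exact prod_congr rfl fun m _ => by ring
  have hGamma : Real.Gamma (k ^ 2 + 1) = (k ^ 2).factorial := by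
    exact_mod_cast Real.Gamma_nat_eq_factorial (k ^ 2)
  have hden : ∏ i ∈ range k, ((i + 1).ascFactorial k : ℝ) ≠ 0 := by positivity
  refine ((tendsto_prod_add_div_pow_card_atTop (range k ×ˢ range k)
    (fun p => 1 + p.1 + p.2)).comp tendsto_natCast_atTop_atTop).congr' ?_
  filter_upwards [eventually_ne_atTop 0] with N hN
  rw [Function.comp_apply, card_product, card_range, ← sq, prod_Icc_Gamma_mul_Gamma_div_sq_eq,
    hconst, hGamma, hnum]
  field_simp
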